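/- arXiv:math/0209290 — 6 statements merged into one kernel-verified Lean document; each statement's English description precedes it below -/
import Mathlib

section
/- Let f be smooth on an open U ⊆ ℝ² with f_x, f_y nowhere zero, and set ω₁ = −f_x dx, ω₂ = −f_y dy, ω₃ = df, and γ = −H·ω₃ where H = f_{xy}/(f_x f_y). Then the structure equations dω₁ = ω₁ ∧ γ and dω₂ = ω₂ ∧ γ hold. -/
noncomputable def px (f : ℝ × ℝ → ℝ) (z : ℝ × ℝ) : ℝ := fderiv ℝ f z (1, 0)
noncomputable def py (f : ℝ × ℝ → ℝ) (z : ℝ × ℝ) : ℝ := fderiv ℝ f z (0, 1)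

/-- `H = f_{xy}/(f_x f_y)`. -/
noncomputable def Hfun (f : ℝ × ℝ → ℝ) (z : ℝ × ℝ) : ℝ :=
  px (py f) z / (px f z * py f z)

noncomputable def w1 (f : ℝ × ℝ → ℝ) (z : ℝ × ℝ) : ℝ × ℝ := (-(px f z), 0)
noncomputable def w2 (f : ℝ × ℝ → ℝ) (z : ℝ × ℝ) : ℝ × ℝ := (0, -(py f z))
noncomputable def w3 (f : ℝ × ℝ → ℝ) (z : ℝ × ℝ) : ℝ × ℝ := (px f z, py f z)

/-- `γ = -H ω₃`. -/
noncomputable def gam (f : ℝ × ℝ → ℝ) (z : ℝ × ℝ) : ℝ × ℝ :=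
  (-(Hfun f z) * px f z, -(Hfun f z) * py f z)

/-- Coefficient of `dx ∧ dy` in the exterior differential of a 1-form. -/
noncomputable def curl (ω : ℝ × ℝ → ℝ × ℝ) (z : ℝ × ℝ) : ℝ :=
  px (fun w => (ω w).2) z - py (fun w => (ω w).1) z

def wedge (a b : ℝ × ℝ) : ℝ := a.1 * b.2 - a.2 * b.1

/-! Both sides of each structure equation equal `± f_{xy}`: the wedge products because
`H f_x f_y = f_{xy}`, the exterior differentials by the symmetry of second derivatives. -/

theorem fderiv_fderiv_apply_comm {𝕜 E F : Type*} [RCLike 𝕜] [NormedAddCommGroup E]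
    [NormedSpace 𝕜 E] [NormedAddCommGroup F] [NormedSpace 𝕜 F] {f : E → F} {x : E}
    (hf : ContDiffAt 𝕜 2 f x) (v w : E) :
    fderiv 𝕜 (fun y => fderiv 𝕜 f y v) x w = fderiv 𝕜 (fun y => fderiv 𝕜 f y w) x v := by
  have hdf : DifferentiableAt 𝕜 (fderiv 𝕜 f) x :=
    (hf.fderiv_right (m := 1) (by norm_num)).differentiableAt one_ne_zero
  rw [fderiv_clm_apply hdf (differentiableAt_const v),
    fderiv_clm_apply hdf (differentiableAt_const w)]
  simpa using (hf.isSymmSndFDerivAt (by simp)).eq w v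

section PartialDerivatives

variable {f g : ℝ × ℝ → ℝ} {z : ℝ × ℝ}

theorem py_px_eq_px_py (hf : ContDiffAt ℝ 2 f z) : py (px f) z = px (py f) z :=
  fderiv_fderiv_apply_comm hf _ _

theorem px_const (c : ℝ) : px (fun _ => c) z = 0 := by simp [px]

theorem py_const (c : ℝ) : py (fun _ => c) z = 0 := by simp [py]

theorem px_neg : px (fun w => -g w) z = -px g z := by simp [px]

theorem py_neg : py (fun w => -g w) z = -py g z := by simp [py]

theorem curl_w1 : curl (w1 f) z = py (px f) z := by
  simp only [curl, w1, px_const, py_neg, zero_sub, neg_neg]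

theorem curl_w2 : curl (w2 f) z = -px (py f) z := by
  simp only [curl, w2, px_neg, py_const, sub_zero]

theorem wedge_w1_gam (hx : px f z ≠ 0) (hy : py f z ≠ 0) :
    wedge (w1 f z) (gam f z) = px (py f) z := by
  simp only [wedge, w1, gam, Hfun]
  field_simp
  ring

theorem wedge_w2_gam (hx : px f z ≠ 0) (hy : py f z ≠ 0) :
    wedge (w2 f z) (gam f z) = -px (py f) z := by
  simp only [wedge, w2, gam, Hfun]
  field_simp
  ring

end PartialDerivatives

/-- first structure equations `dω₁ = ω₁ ∧ γ`, `dω₂ = ω₂ ∧ γ`. -/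
theorem stmt_3 (U : Set (ℝ × ℝ)) (hU : IsOpen U) (f : ℝ × ℝ → ℝ)
    (hf : ContDiffOn ℝ (⊤ : ℕ∞) f U)
    (hfx : ∀ z ∈ U, px f z ≠ 0) (hfy : ∀ z ∈ U, py f z ≠ 0) :
    ∀ z ∈ U, curl (w1 f) z = wedge (w1 f z) (gam f z) ∧
      curl (w2 f) z = wedge (w2 f z) (gam f z) := by
  intro z hz
  have hC2 : ContDiffAt ℝ 2 f z :=
    (hf.contDiffAt (hU.mem_nhds hz)).of_le (WithTop.coe_le_coe.2 le_top)
  constructor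
  · rw [curl_w1, wedge_w1_gam (hfx z hz) (hfy z hz), py_px_eq_px_py hC2]
  · rw [curl_w2, wedge_w2_gam (hfx z hz) (hfy z hz)]
end

section
/- Let T : Λ¹(M) → Λ¹(M) ⊗ Λ¹(M) be a symmetric deformation tensor on a 2-manifold, written in a coframe (ω₁, ω₂) as T(ω₁) = T¹₁₁ ω₁⊗ω₁ + T¹₁₂(ω₁⊗ω₂ + ω₂⊗ω₁) + T¹₂₂ ω₂⊗ω₂ and similarly T(ω₂). Suppose the connection d_γ − T makes the three foliations {ω₁=0}, {ω₂=0}, {ω₃=0} geodesic, where ω₃ = −ω₁ − ω₂ and d_γ(ω_i) = −ω_i ⊗ γ. Then T¹₂₂ = 0, T²₁₁ = 0, and T¹₁₁ + T²₂₂ = 2(T¹₁₂ + T²₁₂); hence, setting λ₁ = T²₁₂ and λ₂ = T¹₁₂, there exists a function μ with T¹₁₁ = 2λ₁ + μ and T²₂₂ = 2λ₂ − μ. -/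
def pairR (a v : ℝ × ℝ) : ℝ := a.1 * v.1 + a.2 * v.2

/-- A symmetric 2-tensor `A w₁⊗w₁ + B (w₁⊗w₂ + w₂⊗w₁) + C w₂⊗w₂`
evaluated on vectors `X, Y`. -/
def Tform (A B C : ℝ) (w₁ w₂ X Y : ℝ × ℝ) : ℝ :=
  A * pairR w₁ X * pairR w₁ Y +
    B * (pairR w₁ X * pairR w₂ Y + pairR w₂ X * pairR w₁ Y) +
    C * pairR w₂ X * pairR w₂ Y

/-- `(d_γ θ - T θ)(X, Y)` where `d_γ θ = -θ ⊗ γ`. -/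
def nablaB (θ γ : ℝ × ℝ) (T : ℝ × ℝ → ℝ × ℝ → ℝ) (X Y : ℝ × ℝ) : ℝ :=
  -(pairR θ X * pairR γ Y) - T X Y

/-- if `d_γ - T` makes the three web foliations geodesic, then
`T¹₂₂ = T²₁₁ = 0` and `T¹₁₁ + T²₂₂ = 2(T¹₁₂ + T²₁₂)`; hence with `λ₁ = T²₁₂`,
`λ₂ = T¹₁₂` there is `μ` with `T¹₁₁ = 2λ₁ + μ` and `T²₂₂ = 2λ₂ - μ`. -/
theorem stmt_9 (U : Set (ℝ × ℝ)) (hU : IsOpen U)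
    (ω₁ ω₂ γ : (ℝ × ℝ) → ℝ × ℝ)
    (T111 T112 T122 T211 T212 T222 : (ℝ × ℝ) → ℝ)
    (hframe : ∀ z ∈ U, (ω₁ z).1 * (ω₂ z).2 - (ω₁ z).2 * (ω₂ z).1 ≠ 0)
    -- `{ω₁ = 0}` is geodesic
    (hgeo1 : ∃ α β : (ℝ × ℝ) → ℝ × ℝ, ∀ z ∈ U, ∀ X Y : ℝ × ℝ,
      nablaB (ω₁ z) (γ z) (Tform (T111 z) (T112 z) (T122 z) (ω₁ z) (ω₂ z)) X Y =
        pairR (α z) X * pairR (ω₁ z) Y + pairR (ω₁ z) X * pairR (β z) Y)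
    -- `{ω₂ = 0}` is geodesic
    (hgeo2 : ∃ α β : (ℝ × ℝ) → ℝ × ℝ, ∀ z ∈ U, ∀ X Y : ℝ × ℝ,
      nablaB (ω₂ z) (γ z) (Tform (T211 z) (T212 z) (T222 z) (ω₁ z) (ω₂ z)) X Y =
        pairR (α z) X * pairR (ω₂ z) Y + pairR (ω₂ z) X * pairR (β z) Y)
    -- `{ω₃ = 0}` is geodesic, where `ω₃ = -ω₁ - ω₂` and `T(ω₃) = -T(ω₁) - T(ω₂)`
    (hgeo3 : ∃ α β : (ℝ × ℝ) → ℝ × ℝ, ∀ z ∈ U, ∀ X Y : ℝ × ℝ,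
      nablaB (-ω₁ z - ω₂ z) (γ z)
          (fun X Y => -(Tform (T111 z) (T112 z) (T122 z) (ω₁ z) (ω₂ z) X Y +
            Tform (T211 z) (T212 z) (T222 z) (ω₁ z) (ω₂ z) X Y)) X Y =
        pairR (α z) X * pairR (-ω₁ z - ω₂ z) Y + pairR (-ω₁ z - ω₂ z) X * pairR (β z) Y) :
    (∀ z ∈ U, T122 z = 0) ∧ (∀ z ∈ U, T211 z = 0) ∧
    (∀ z ∈ U, T111 z + T222 z = 2 * (T112 z + T212 z)) ∧
    ∃ μ : (ℝ × ℝ) → ℝ, ∀ z ∈ U,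
      T111 z = 2 * T212 z + μ z ∧ T222 z = 2 * T112 z - μ z := by
  obtain ⟨α1, β1, h1⟩ := hgeo1
  obtain ⟨α2, β2, h2⟩ := hgeo2
  obtain ⟨α3, β3, h3⟩ := hgeo3
  have key : ∀ z ∈ U, T122 z = 0 ∧ T211 z = 0 ∧
      T111 z + T222 z = 2 * (T112 z + T212 z) := by
    intro z hz
    have hD := hframe z hz
    have hD2 : ((ω₁ z).1 * (ω₂ z).2 - (ω₁ z).2 * (ω₂ z).1) *
        ((ω₁ z).1 * (ω₂ z).2 - (ω₁ z).2 * (ω₂ z).1) ≠ 0 := mul_ne_zero hD hD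
    have e1 := h1 z hz (-(ω₁ z).2, (ω₁ z).1) (-(ω₁ z).2, (ω₁ z).1)
    have e2 := h2 z hz ((ω₂ z).2, -(ω₂ z).1) ((ω₂ z).2, -(ω₂ z).1)
    have e3 := h3 z hz ((ω₂ z).2 + (ω₁ z).2, -(ω₂ z).1 - (ω₁ z).1)
      ((ω₂ z).2 + (ω₁ z).2, -(ω₂ z).1 - (ω₁ z).1)
    simp only [nablaB, Tform, pairR, Prod.fst_sub, Prod.snd_sub, Prod.fst_neg, Prod.snd_neg] at e1 e2 e3
    have q1 : T122 z * (((ω₁ z).1 * (ω₂ z).2 - (ω₁ z).2 * (ω₂ z).1) *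
        ((ω₁ z).1 * (ω₂ z).2 - (ω₁ z).2 * (ω₂ z).1)) = 0 := by linear_combination -e1
    have q2 : T211 z * (((ω₁ z).1 * (ω₂ z).2 - (ω₁ z).2 * (ω₂ z).1) *
        ((ω₁ z).1 * (ω₂ z).2 - (ω₁ z).2 * (ω₂ z).1)) = 0 := by linear_combination -e2
    have q3 : (T111 z + T122 z + T211 z + T222 z - 2 * (T112 z + T212 z)) *
        (((ω₁ z).1 * (ω₂ z).2 - (ω₁ z).2 * (ω₂ z).1) *
        ((ω₁ z).1 * (ω₂ z).2 - (ω₁ z).2 * (ω₂ z).1)) = 0 := by linear_combination e3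
    have hA : T122 z = 0 := by
      rcases mul_eq_zero.mp q1 with h | h
      · exact h
      · exact absurd h hD2
    have hB : T211 z = 0 := by
      rcases mul_eq_zero.mp q2 with h | h
      · exact h
      · exact absurd h hD2
    refine ⟨hA, hB, ?_⟩
    rcases mul_eq_zero.mp q3 with h | h
    · linarith
    · exact absurd h hD2
  refine ⟨fun z hz => (key z hz).1, fun z hz => (key z hz).2.1,
    fun z hz => (key z hz).2.2, fun z => T111 z - 2 * T212 z, fun z hz => ⟨by ring, ?_⟩⟩
  have := (key z hz).2.2
  show T222 z = 2 * T112 z - (T111 z - 2 * T212 z)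
  linarith
end

section
/- Suppose λ₁, λ₂, μ, H, K are smooth functions on a 2-manifold with frame vector fields ∂₁, ∂₂ satisfying [∂₁,∂₂] = H(∂₂−∂₁) and K = ∂₁(H) − ∂₂(H). If λ₁, λ₂ satisfy the system ∂₁λ₁ = λ₁(H+λ₁+μ), ∂₂λ₁ = K/3 + H(λ₁+μ/3) + λ₁λ₂ + (1/3)∂₁μ − (2/3)∂₂μ, ∂₁λ₂ = −K/3 + H(λ₂−μ/3) + λ₁λ₂ + (2/3)∂₁μ − (1/3)∂₂μ, ∂₂λ₂ = λ₂(H+λ₂−μ), then the compatibility conditions ∂₁∂₂λ_i − ∂₂∂₁λ_i = H(∂₂λ_i − ∂₁λ_i) (i = 1,2) hold identically if and only if I₁(μ) = 0 and I₂(μ) = 0, where I₁(μ) = −∂₁²μ + 2∂₁∂₂μ + (μ+H)∂₁μ − 2(2H+μ)∂₂μ + Hμ² + (2H² − ∂₂H)μ − ∂₁K + 2HK and I₂(μ) = −∂₂²μ + 2∂₁∂₂μ + 2(μ−H)∂₁μ − (H+μ)∂₂μ − Hμ² + (2H² − ∂₁H)μ − ∂₂K + 2HK. -/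
/-- Derivative of `g` along the vector field `X`. -/
noncomputable def vd (X : ℝ × ℝ → ℝ × ℝ) (g : ℝ × ℝ → ℝ) (z : ℝ × ℝ) : ℝ :=
  fderiv ℝ g z (X z)

/-- the formal compatibility conditions of the Akivis–Goldberg
system hold identically (for all values `l1, l2` of `λ₁, λ₂`) if and only if
`I₁(μ) = 0` and `I₂(μ) = 0`. The second mixed derivatives of `λ₁, λ₂` are
computed by formal prolongation, substituting the first-order system. -/
theorem stmt_11 (U : Set (ℝ × ℝ)) (hU : IsOpen U)
    (X1 X2 : ℝ × ℝ → ℝ × ℝ) (H μ K : ℝ × ℝ → ℝ)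
    (hX1 : ContDiffOn ℝ (⊤ : ℕ∞) X1 U) (hX2 : ContDiffOn ℝ (⊤ : ℕ∞) X2 U)
    (hH : ContDiffOn ℝ (⊤ : ℕ∞) H U) (hμ : ContDiffOn ℝ (⊤ : ℕ∞) μ U)
    (hK : ContDiffOn ℝ (⊤ : ℕ∞) K U)
    -- `[∂₁, ∂₂] = H (∂₂ - ∂₁)`
    (hbr : ∀ g : ℝ × ℝ → ℝ, ContDiffOn ℝ (⊤ : ℕ∞) g U → ∀ z ∈ U,
      vd X1 (vd X2 g) z - vd X2 (vd X1 g) z = H z * (vd X2 g z - vd X1 g z))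
    -- `K = ∂₁(H) - ∂₂(H)`
    (hKdef : ∀ z ∈ U, K z = vd X1 H z - vd X2 H z) :
    (∀ z ∈ U, ∀ l1 l2 : ℝ,
      -- the right-hand sides of the Akivis–Goldberg system at values l1, l2:
      let R11 := l1 * (H z + l1 + μ z);
      let R12 := K z / 3 + H z * (l1 + μ z / 3) + l1 * l2 +
        vd X1 μ z / 3 - 2 * vd X2 μ z / 3;
      let R21 := -K z / 3 + H z * (l2 - μ z / 3) + l1 * l2 +
        2 * vd X1 μ z / 3 - vd X2 μ z / 3;
      let R22 := l2 * (H z + l2 - μ z);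
      -- compatibility  ∂₁∂₂λ₁ - ∂₂∂₁λ₁ = H(∂₂λ₁ - ∂₁λ₁)  (prolonged):
      (vd X1 K z / 3 + vd X1 H z * (l1 + μ z / 3) + H z * (R11 + vd X1 μ z / 3) +
          R11 * l2 + l1 * R21 + vd X1 (vd X1 μ) z / 3 - 2 * vd X1 (vd X2 μ) z / 3 -
          (R12 * (H z + l1 + μ z) + l1 * (vd X2 H z + R12 + vd X2 μ z)) -
          H z * (R12 - R11) = 0) ∧
      -- compatibility  ∂₁∂₂λ₂ - ∂₂∂₁λ₂ = H(∂₂λ₂ - ∂₁λ₂)  (prolonged):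
      (R21 * (H z + l2 - μ z) + l2 * (vd X1 H z + R21 - vd X1 μ z) -
          (-vd X2 K z / 3 + vd X2 H z * (l2 - μ z / 3) +
            H z * (R22 - vd X2 μ z / 3) + R12 * l2 + l1 * R22 +
            2 * vd X2 (vd X1 μ) z / 3 - vd X2 (vd X2 μ) z / 3) -
          H z * (R22 - R21) = 0)) ↔
    (∀ z ∈ U,
      -- I₁(μ) = 0
      (-vd X1 (vd X1 μ) z + 2 * vd X1 (vd X2 μ) z + (μ z + H z) * vd X1 μ z -
          2 * (2 * H z + μ z) * vd X2 μ z + H z * (μ z) ^ 2 +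
          (2 * (H z) ^ 2 - vd X2 H z) * μ z - vd X1 K z + 2 * H z * K z = 0) ∧
      -- I₂(μ) = 0
      (-vd X2 (vd X2 μ) z + 2 * vd X1 (vd X2 μ) z + 2 * (μ z - H z) * vd X1 μ z -
          (H z + μ z) * vd X2 μ z - H z * (μ z) ^ 2 +
          (2 * (H z) ^ 2 - vd X1 H z) * μ z - vd X2 K z + 2 * H z * K z = 0)) := by
  constructor
  · intro h z hz
    have hb := hbr μ hμ z hz
    have hk := hKdef z hz
    obtain ⟨e1, e2⟩ := h z hz 0 0
    constructor
    · linear_combination (-3 : ℝ) * e1 - μ z * hk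
    · linear_combination (-3 : ℝ) * e2 + 2 * hb + μ z * hk
  · intro h z hz l1 l2
    have hb := hbr μ hμ z hz
    have hk := hKdef z hz
    obtain ⟨i1, i2⟩ := h z hz
    refine ⟨?_, ?_⟩
    · linear_combination (-1/3 : ℝ) * i1 - (l1 + μ z / 3) * hk
    · linear_combination (-1/3 : ℝ) * i2 + (2/3 : ℝ) * hb - (l2 - μ z / 3) * hk
end

section
/- Let ∇ = d_γ − T be a torsion-free connection for a normalized 4-web with ω₁ + ω₂ + ω₃ = 0 and ω₄ + aω₁ + ω₂ = 0 (a a smooth function nowhere 0 or 1), with deformation tensor of the form T(ω₁) = (2λ₁+μ)ω₁⊗ω₁ + λ₂(ω₁⊗ω₂+ω₂⊗ω₁), T(ω₂) = (2λ₂−μ)ω₂⊗ω₂ + λ₁(ω₁⊗ω₂+ω₂⊗ω₁). Then the foliation {ω₄ = 0} is geodesic for ∇ if and only if μ = (∂₁(a) − a·∂₂(a))/(a − a²). -/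
lemma inv2 (p q r s u v x y : ℝ) (h11 : p*u + q*v = 1) (h12 : p*x + q*y = 0)
    (h21 : r*u + s*v = 0) (h22 : r*x + s*y = 1) :
    u*p + x*r = 1 ∧ u*q + x*s = 0 ∧ v*p + y*r = 0 ∧ v*q + y*s = 1 := by
  have hA : !![p,q;r,s] * !![u,x;v,y] = 1 := by
    ext i j
    fin_cases i <;> fin_cases j <;>
      simp [Matrix.mul_apply, Fin.sum_univ_two] <;> linarith
  have hB := mul_eq_one_comm.mp hA
  have h00 := congrFun (congrFun hB 0) 0
  have h01 := congrFun (congrFun hB 0) 1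
  have h10 := congrFun (congrFun hB 1) 0
  have h11' := congrFun (congrFun hB 1) 1
  simp [Matrix.mul_apply, Fin.sum_univ_two] at h00 h01 h10 h11'
  exact ⟨by linarith, by linarith, by linarith, by linarith⟩

lemma fderiv_coord (f : (ℝ × ℝ) → ℝ) (z Y : ℝ × ℝ) :
    fderiv ℝ f z Y = Y.1 * fderiv ℝ f z (1, 0) + Y.2 * fderiv ℝ f z (0, 1) := by
  have hY : Y = Y.1 • ((1 : ℝ), (0 : ℝ)) + Y.2 • ((0 : ℝ), (1 : ℝ)) := by
    ext <;> simp
  conv_lhs => rw [hY]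
  rw [map_add, map_smul, map_smul, smul_eq_mul, smul_eq_mul]

lemma pairR_nsmul_sub_left (c : ℝ) (v w u : ℝ × ℝ) :
    pairR ((-c) • v - w) u = -(c * pairR v u) - pairR w u := by
  simp [pairR]; ring

lemma pairR_sub_smul_right (w u₁ u₂ : ℝ × ℝ) (d : ℝ) :
    pairR w (u₁ - d • u₂) = pairR w u₁ - d * pairR w u₂ := by
  simp [pairR]; ring

lemma pairR_comb_left (c d : ℝ) (v w u : ℝ × ℝ) :
    pairR (c • v + d • w) u = c * pairR v u + d * pairR w u := by
  simp [pairR]; ring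

lemma pairR_neg_add_left (v : ℝ × ℝ) (c : ℝ) (w u : ℝ × ℝ) :
    pairR (-v + c • w) u = -pairR v u + c * pairR w u := by
  simp [pairR]; ring

/-- for the torsion-free connection `∇ = d_γ - T` of a normalized
4-web (`ω₄ = -a ω₁ - ω₂`), the foliation `{ω₄ = 0}` is geodesic iff
`μ = (∂₁(a) - a ∂₂(a))/(a - a²)`.  Here
`d_∇ ω₄ = -ω₄ ⊗ γ - ω₁ ⊗ da + a T(ω₁) + T(ω₂)` as a bilinear form. -/
theorem stmt_13 (U : Set (ℝ × ℝ)) (hU : IsOpen U)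
    (ω₁ ω₂ e₁ e₂ γ : (ℝ × ℝ) → ℝ × ℝ) (a lam₁ lam₂ μ : (ℝ × ℝ) → ℝ)
    (hdual11 : ∀ z ∈ U, pairR (ω₁ z) (e₁ z) = 1)
    (hdual12 : ∀ z ∈ U, pairR (ω₁ z) (e₂ z) = 0)
    (hdual21 : ∀ z ∈ U, pairR (ω₂ z) (e₁ z) = 0)
    (hdual22 : ∀ z ∈ U, pairR (ω₂ z) (e₂ z) = 1)
    (ha : ContDiffOn ℝ (⊤ : ℕ∞) a U)
    (ha0 : ∀ z ∈ U, a z ≠ 0) (ha1 : ∀ z ∈ U, a z ≠ 1) :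
    -- `{ω₄ = 0}` is geodesic for `∇ = d_γ - T`, i.e. `d_∇ ω₄ = α⊗ω₄ + ω₄⊗β` …
    (∃ α β : (ℝ × ℝ) → ℝ × ℝ, ∀ z ∈ U, ∀ X Y : ℝ × ℝ,
      -(pairR ((-(a z)) • ω₁ z - ω₂ z) X * pairR (γ z) Y) -
          pairR (ω₁ z) X * fderiv ℝ a z Y +
          a z * Tform (2 * lam₁ z + μ z) (lam₂ z) 0 (ω₁ z) (ω₂ z) X Y +
          Tform 0 (lam₁ z) (2 * lam₂ z - μ z) (ω₁ z) (ω₂ z) X Y =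
        pairR (α z) X * pairR ((-(a z)) • ω₁ z - ω₂ z) Y +
          pairR ((-(a z)) • ω₁ z - ω₂ z) X * pairR (β z) Y) ↔
    -- … iff `μ = (∂₁(a) - a ∂₂(a))/(a - a²)`
    (∀ z ∈ U,
      μ z = (fderiv ℝ a z (e₁ z) - a z * fderiv ℝ a z (e₂ z)) / (a z - (a z) ^ 2)) := by
  constructor
  · rintro ⟨α, β, H⟩ z hz
    have hne : a z - (a z) ^ 2 ≠ 0 := by
      have h1 : a z * (1 - a z) ≠ 0 :=
        mul_ne_zero (ha0 z hz) (sub_ne_zero.2 (Ne.symm (ha1 z hz)))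
      intro h; exact h1 (by linear_combination h)
    have hD : fderiv ℝ a z (e₁ z - a z • e₂ z) =
        fderiv ℝ a z (e₁ z) - a z * fderiv ℝ a z (e₂ z) := by
      rw [map_sub, map_smul, smul_eq_mul]
    have key := H z hz (e₁ z - a z • e₂ z) (e₁ z - a z • e₂ z)
    simp only [Tform, pairR_nsmul_sub_left, pairR_sub_smul_right, hD,
      hdual11 z hz, hdual12 z hz, hdual21 z hz, hdual22 z hz] at key
    rw [eq_div_iff hne]
    linear_combination key
  · intro hμ
    refine ⟨fun z => (fderiv ℝ a z (e₂ z) - a z * lam₂ z - lam₁ z) • ω₁ z +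
        (μ z - 2 * lam₂ z) • ω₂ z,
      fun z => -γ z + (a z * lam₂ z - lam₁ z - a z * μ z) • ω₁ z, ?_⟩
    intro z hz X Y
    have hne : a z - (a z) ^ 2 ≠ 0 := by
      have h1 : a z * (1 - a z) ≠ 0 :=
        mul_ne_zero (ha0 z hz) (sub_ne_zero.2 (Ne.symm (ha1 z hz)))
      intro h; exact h1 (by linear_combination h)
    have hμ' : μ z * (a z - (a z) ^ 2) =
        fderiv ℝ a z (e₁ z) - a z * fderiv ℝ a z (e₂ z) := by
      rw [hμ z hz, div_mul_cancel₀ _ hne]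
    -- spanning: express fderiv in terms of ω₁, ω₂
    have h11 := hdual11 z hz
    have h12 := hdual12 z hz
    have h21 := hdual21 z hz
    have h22 := hdual22 z hz
    simp only [pairR] at h11 h12 h21 h22
    obtain ⟨k1, k2, k3, k4⟩ := inv2 (ω₁ z).1 (ω₁ z).2 (ω₂ z).1 (ω₂ z).2
      (e₁ z).1 (e₁ z).2 (e₂ z).1 (e₂ z).2 h11 h12 h21 h22
    have hspan : fderiv ℝ a z Y =
        fderiv ℝ a z (e₁ z) * pairR (ω₁ z) Y + fderiv ℝ a z (e₂ z) * pairR (ω₂ z) Y := by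
      rw [fderiv_coord a z Y, fderiv_coord a z (e₁ z), fderiv_coord a z (e₂ z)]
      simp only [pairR]
      linear_combination (-(fderiv ℝ a z (1,0) * Y.1)) * k1 + (-(fderiv ℝ a z (1,0) * Y.2)) * k2 +
        (-(fderiv ℝ a z (0,1) * Y.1)) * k3 + (-(fderiv ℝ a z (0,1) * Y.2)) * k4
    rw [hspan]
    simp only [Tform, pairR_nsmul_sub_left, pairR_comb_left, pairR_neg_add_left]
    linear_combination (pairR (ω₁ z) X * pairR (ω₁ z) Y) * hμ'
end

section
/- Define covariant derivatives of weight k by δ₁⁽ᵏ⁾(u) = ∂₁(u) − kHu and δ₂⁽ᵏ⁾(u) = ∂₂(u) − kHu, where ∂₁, ∂₂ are vector fields with [∂₁,∂₂] = H(∂₂−∂₁) and K = ∂₁H − ∂₂H. Then for every integer s ≥ 0 and every smooth function u, (δ₂⁽ˢ⁺¹⁾ ∘ δ₁⁽ˢ⁾ − δ₁⁽ˢ⁺¹⁾ ∘ δ₂⁽ˢ⁾)(u) = sK·u. -/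
/-- Covariant derivative of weight `k`: `δᵢ⁽ᵏ⁾(u) = ∂ᵢ(u) - k H u`. -/
noncomputable def delk (X : ℝ × ℝ → ℝ × ℝ) (H : ℝ × ℝ → ℝ) (k : ℕ)
    (u : ℝ × ℝ → ℝ) (z : ℝ × ℝ) : ℝ :=
  vd X u z - (k : ℝ) * H z * u z

section Derivation

variable {X Y : ℝ × ℝ → ℝ × ℝ} {f g : ℝ × ℝ → ℝ} {z : ℝ × ℝ}

lemma vd_sub (hf : DifferentiableAt ℝ f z) (hg : DifferentiableAt ℝ g z) :
    vd X (fun w => f w - g w) z = vd X f z - vd X g z := by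
  simp only [vd, fderiv_fun_sub hf hg, sub_apply]

lemma vd_const_mul (c : ℝ) (hf : DifferentiableAt ℝ f z) :
    vd X (fun w => c * f w) z = c * vd X f z := by
  simp only [vd, fderiv_const_mul hf, smul_apply, smul_eq_mul]

lemma vd_mul (hf : DifferentiableAt ℝ f z) (hg : DifferentiableAt ℝ g z) :
    vd X (fun w => f w * g w) z = vd X f z * g z + f z * vd X g z := by
  simp only [vd, fderiv_fun_mul hf hg, add_apply,
    smul_apply, smul_eq_mul]
  ring

lemma delk_eq (H : ℝ × ℝ → ℝ) (k : ℕ) (u : ℝ × ℝ → ℝ) :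
    delk X H k u = fun w => vd X u w - (k : ℝ) * (H w * u w) := by
  funext w
  rw [delk, mul_assoc]

lemma vd_delk {H u : ℝ × ℝ → ℝ} (k : ℕ) (hXu : DifferentiableAt ℝ (vd X u) z)
    (hH : DifferentiableAt ℝ H z) (hu : DifferentiableAt ℝ u z) :
    vd Y (delk X H k u) z = vd Y (vd X u) z - (k : ℝ) * (vd Y H z * u z + H z * vd Y u z) := by
  rw [delk_eq, vd_sub hXu ((hH.fun_mul hu).const_mul _), vd_const_mul _ (hH.fun_mul hu), vd_mul hH hu]

end Derivation

lemma ContDiffOn.vd {U : Set (ℝ × ℝ)} (hU : IsOpen U) {X : ℝ × ℝ → ℝ × ℝ} {u : ℝ × ℝ → ℝ}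
    (hu : ContDiffOn ℝ (⊤ : ℕ∞) u U) (hX : ContDiffOn ℝ (⊤ : ℕ∞) X U) :
    ContDiffOn ℝ (⊤ : ℕ∞) (vd X u) U :=
  (hu.fderiv_of_isOpen hU (by exact_mod_cast le_top)).clm_apply hX

lemma ContDiffOn.differentiableAt_of_isOpen {U : Set (ℝ × ℝ)} (hU : IsOpen U) {f : ℝ × ℝ → ℝ}
    (hf : ContDiffOn ℝ (⊤ : ℕ∞) f U) {z : ℝ × ℝ} (hz : z ∈ U) : DifferentiableAt ℝ f z :=
  (hf.contDiffAt (hU.mem_nhds hz)).differentiableAt (by simp)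

/-- commutator relation
`δ₂⁽ˢ⁺¹⁾ ∘ δ₁⁽ˢ⁾ - δ₁⁽ˢ⁺¹⁾ ∘ δ₂⁽ˢ⁾ = s K` with `K = ∂₁(H) - ∂₂(H)`. -/
theorem stmt_15 (U : Set (ℝ × ℝ)) (hU : IsOpen U)
    (X1 X2 : ℝ × ℝ → ℝ × ℝ) (H : ℝ × ℝ → ℝ)
    (hX1 : ContDiffOn ℝ (⊤ : ℕ∞) X1 U) (hX2 : ContDiffOn ℝ (⊤ : ℕ∞) X2 U)
    (hH : ContDiffOn ℝ (⊤ : ℕ∞) H U)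
    -- `[∂₁, ∂₂] = H (∂₂ - ∂₁)`
    (hbr : ∀ g : ℝ × ℝ → ℝ, ContDiffOn ℝ (⊤ : ℕ∞) g U → ∀ z ∈ U,
      vd X1 (vd X2 g) z - vd X2 (vd X1 g) z = H z * (vd X2 g z - vd X1 g z)) :
    ∀ s : ℕ, ∀ u : ℝ × ℝ → ℝ, ContDiffOn ℝ (⊤ : ℕ∞) u U → ∀ z ∈ U,
      delk X2 H (s + 1) (delk X1 H s u) z - delk X1 H (s + 1) (delk X2 H s u) z =
        (s : ℝ) * (vd X1 H z - vd X2 H z) * u z := by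
  intro s u hu z hz
  have hHz := hH.differentiableAt_of_isOpen hU hz
  have huz := hu.differentiableAt_of_isOpen hU hz
  have h21 := vd_delk (Y := X2) s ((hu.vd hU hX1).differentiableAt_of_isOpen hU hz) hHz huz
  have h12 := vd_delk (Y := X1) s ((hu.vd hU hX2).differentiableAt_of_isOpen hU hz) hHz huz
  simp only [delk, h21, h12]
  push_cast
  -- the bracket contributes `H (∂₂u - ∂₁u)`, cancelling the `H (∂₁u - ∂₂u)` produced by
  -- the weight jump `s → s + 1`; only the derivatives of `H` survive
  linear_combination (-1 : ℝ) * hbr u hu z hz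
end

section
/- For the Bol 5-web on U = {(x,y) ∈ ℝ² : 0 < x < 1, 0 < y < 1, x ≠ y} given by web functions f(x,y) = y/x, g(x,y) = (1−y)/(1−x), g₅(x,y) = (x−xy)/(y−xy), the relative invariant I₅ := I(f,g₅) − I(f,g) is not identically zero on U, where I(f,p) = ((∂₁p)²∂₂²p − 2∂₁p·∂₂p·∂₁∂₂p + (∂₂p)²∂₁²p)/(∂₁p·∂₂p·(∂₂p − ∂₁p)) with ∂₁ = −(1/f_x)∂_x, ∂₂ = −(1/f_y)∂_y. Consequently the Bol 5-web is not linearizable (granting the linearizability criterion). -/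
noncomputable def d1 (f g : ℝ × ℝ → ℝ) (z : ℝ × ℝ) : ℝ := -(px g z) / px f z
noncomputable def d2 (f g : ℝ × ℝ → ℝ) (z : ℝ × ℝ) : ℝ := -(py g z) / py f z

/-- The second-order invariant `I(f,p)`. -/
noncomputable def Iinv (f p : ℝ × ℝ → ℝ) (z : ℝ × ℝ) : ℝ :=
  ((d1 f p z) ^ 2 * d2 f (d2 f p) z - 2 * d1 f p z * d2 f p z * d1 f (d2 f p) z +
      (d2 f p z) ^ 2 * d1 f (d1 f p) z) /
    (d1 f p z * d2 f p z * (d2 f p z - d1 f p z))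

/-!
The web functions `g = (1 - x)⁻¹ (1 - y)` and `g₅ = (x / (1 - x)) ((1 - y) / y)` are products
`u(x) v(y)`, and for `f = y / x` the frame derivations are `∂₁ = (x² / y) ∂ₓ` and `∂₂ = -x ∂_y`,
which keep such products separated. So `I(f, u(x) v(y))` is an explicit expression in
`u, u', u''` and `v, v', v''`; evaluating it gives `I(f, g) = 0` and `I(f, g₅) = -2x / y` on `U`.
-/

open Filter Topology

noncomputable def sepMul (u v : ℝ → ℝ) : ℝ × ℝ → ℝ := fun z => u z.1 * v z.2

local notation "ratio" => fun z : ℝ × ℝ => Prod.snd z / Prod.fst z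

section Partials

variable {p q : ℝ × ℝ → ℝ} {z : ℝ × ℝ} {a : ℝ}

lemma px_eq_of_hasDerivAt (hp : DifferentiableAt ℝ p z)
    (h : HasDerivAt (fun t => p (t, z.2)) a z.1) : px p z = a :=
  (hp.hasFDerivAt.comp_hasDerivAt z.1
    ((hasDerivAt_id z.1).prodMk (hasDerivAt_const z.1 z.2))).unique h

lemma py_eq_of_hasDerivAt (hp : DifferentiableAt ℝ p z)
    (h : HasDerivAt (fun t => p (z.1, t)) a z.2) : py p z = a :=
  (hp.hasFDerivAt.comp_hasDerivAt z.2
    ((hasDerivAt_const z.2 z.1).prodMk (hasDerivAt_id z.2))).unique h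

lemma px_congr (h : p =ᶠ[𝓝 z] q) : px p z = px q z := by
  rw [px, px, h.fderiv_eq]

lemma py_congr (h : p =ᶠ[𝓝 z] q) : py p z = py q z := by
  rw [py, py, h.fderiv_eq]

end Partials

section Separated

variable {p : ℝ × ℝ → ℝ} {u u' v v' : ℝ → ℝ} {z : ℝ × ℝ} {a b u'' v'' : ℝ}

lemma differentiableAt_sepMul (hu : DifferentiableAt ℝ u z.1) (hv : DifferentiableAt ℝ v z.2) :
    DifferentiableAt ℝ (sepMul u v) z :=
  (hu.comp z differentiableAt_fst).mul (hv.comp z differentiableAt_snd)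

lemma px_sepMul (hu : HasDerivAt u a z.1) (hv : DifferentiableAt ℝ v z.2) :
    px (sepMul u v) z = a * v z.2 :=
  px_eq_of_hasDerivAt (differentiableAt_sepMul hu.differentiableAt hv) (hu.mul_const (v z.2))

lemma py_sepMul (hu : DifferentiableAt ℝ u z.1) (hv : HasDerivAt v b z.2) :
    py (sepMul u v) z = u z.1 * b :=
  py_eq_of_hasDerivAt (differentiableAt_sepMul hu hv.differentiableAt) (hv.const_mul (u z.1))

lemma ratio_eq_sepMul : (ratio) = sepMul (·⁻¹) id :=
  funext fun _ => div_eq_inv_mul _ _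

lemma d1_ratio (hx : z.1 ≠ 0) : d1 ratio p z = z.1 ^ 2 / z.2 * px p z := by
  rw [d1, ratio_eq_sepMul, px_sepMul (hasDerivAt_inv hx) differentiableAt_id]
  simp only [id, div_eq_mul_inv, mul_inv, inv_neg, inv_inv]
  ring

lemma d2_ratio (hx : z.1 ≠ 0) : d2 ratio p z = -z.1 * py p z := by
  rw [d2, ratio_eq_sepMul, py_sepMul (differentiableAt_inv hx) (hasDerivAt_id z.2)]
  simp only [div_eq_mul_inv, mul_inv, inv_inv]
  ring

lemma d1_ratio_sepMul_eventuallyEq (hx : z.1 ≠ 0) (hu : ∀ᶠ s in 𝓝 z.1, HasDerivAt u (u' s) s)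
    (hv : ∀ᶠ t in 𝓝 z.2, DifferentiableAt ℝ v t) :
    d1 ratio (sepMul u v) =ᶠ[𝓝 z] sepMul (fun s => s ^ 2 * u' s) (fun t => v t / t) := by
  filter_upwards [continuousAt_fst.eventually (eventually_ne_nhds hx),
    continuousAt_fst.eventually hu, continuousAt_snd.eventually hv] with w hwx hwu hwv
  rw [d1_ratio hwx, px_sepMul hwu hwv, sepMul]
  ring

lemma d2_ratio_sepMul_eventuallyEq (hx : z.1 ≠ 0) (hu : ∀ᶠ s in 𝓝 z.1, DifferentiableAt ℝ u s)
    (hv : ∀ᶠ t in 𝓝 z.2, HasDerivAt v (v' t) t) :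
    d2 ratio (sepMul u v) =ᶠ[𝓝 z] sepMul (fun s => -s * u s) v' := by
  filter_upwards [continuousAt_fst.eventually (eventually_ne_nhds hx),
    continuousAt_fst.eventually hu, continuousAt_snd.eventually hv] with w hwx hwu hwv
  rw [d2_ratio hwx, py_sepMul hwu hwv, sepMul]
  ring

lemma d1_d1_ratio_sepMul (hx : z.1 ≠ 0) (hy : z.2 ≠ 0)
    (hu : ∀ᶠ s in 𝓝 z.1, HasDerivAt u (u' s) s) (hu' : HasDerivAt u' u'' z.1)
    (hv : ∀ᶠ t in 𝓝 z.2, DifferentiableAt ℝ v t) :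
    d1 ratio (d1 ratio (sepMul u v)) z =
      z.1 ^ 2 / z.2 * ((2 * z.1 * u' z.1 + z.1 ^ 2 * u'') * (v z.2 / z.2)) := by
  have hd : HasDerivAt (fun s => s ^ 2 * u' s) (2 * z.1 * u' z.1 + z.1 ^ 2 * u'') z.1 :=
    ((hasDerivAt_pow 2 z.1).mul hu').congr_deriv (by ring)
  have hd' : DifferentiableAt ℝ (fun t => v t / t) z.2 :=
    hv.self_of_nhds.div differentiableAt_id hy
  rw [d1_ratio hx, px_congr (d1_ratio_sepMul_eventuallyEq hx hu hv), px_sepMul hd hd']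

lemma d1_d2_ratio_sepMul (hx : z.1 ≠ 0) (hu : ∀ᶠ s in 𝓝 z.1, HasDerivAt u (u' s) s)
    (hv : ∀ᶠ t in 𝓝 z.2, HasDerivAt v (v' t) t) (hv' : DifferentiableAt ℝ v' z.2) :
    d1 ratio (d2 ratio (sepMul u v)) z =
      z.1 ^ 2 / z.2 * ((-u z.1 - z.1 * u' z.1) * v' z.2) := by
  have hd : HasDerivAt (fun s => -s * u s) (-u z.1 - z.1 * u' z.1) z.1 :=
    ((hasDerivAt_neg z.1).mul hu.self_of_nhds).congr_deriv (by ring)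
  rw [d1_ratio hx, px_congr (d2_ratio_sepMul_eventuallyEq hx
    (hu.mono fun _ h => h.differentiableAt) hv), px_sepMul hd hv']

lemma d2_d2_ratio_sepMul (hx : z.1 ≠ 0) (hu : ∀ᶠ s in 𝓝 z.1, DifferentiableAt ℝ u s)
    (hv : ∀ᶠ t in 𝓝 z.2, HasDerivAt v (v' t) t) (hv' : HasDerivAt v' v'' z.2) :
    d2 ratio (d2 ratio (sepMul u v)) z = z.1 ^ 2 * u z.1 * v'' := by
  have hd : DifferentiableAt ℝ (fun s => -s * u s) z.1 :=
    differentiableAt_id.neg.mul hu.self_of_nhds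
  rw [d2_ratio hx, py_congr (d2_ratio_sepMul_eventuallyEq hx hu hv), py_sepMul hd hv']
  ring

end Separated

section OneVariable

variable {s : ℝ}

lemma hasDerivAt_inv_one_sub (hs : s ≠ 1) :
    HasDerivAt (fun s => (1 - s)⁻¹) ((1 - s) ^ 2)⁻¹ s :=
  (((hasDerivAt_id s).const_sub 1).inv (sub_ne_zero.2 hs.symm)).congr_deriv (by simp)

lemma hasDerivAt_div_one_sub (hs : s ≠ 1) :
    HasDerivAt (fun s => s / (1 - s)) ((1 - s) ^ 2)⁻¹ s := by
  have h1 : 1 - s ≠ 0 := sub_ne_zero.2 hs.symm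
  refine ((hasDerivAt_id s).div ((hasDerivAt_id s).const_sub 1) h1).congr_deriv ?_
  simp only [id]
  field_simp
  ring

lemma hasDerivAt_inv_one_sub_sq (hs : s ≠ 1) :
    HasDerivAt (fun s => ((1 - s) ^ 2)⁻¹) (2 / (1 - s) ^ 3) s := by
  have h1 : 1 - s ≠ 0 := sub_ne_zero.2 hs.symm
  refine ((((hasDerivAt_id s).const_sub 1).pow 2).inv (pow_ne_zero 2 h1)).congr_deriv ?_
  simp only [id, Pi.pow_apply]
  field_simp
  ring

lemma hasDerivAt_one_sub_div (hs : s ≠ 0) :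
    HasDerivAt (fun s => (1 - s) / s) (-(s ^ 2)⁻¹) s := by
  refine (((hasDerivAt_id s).const_sub 1).div (hasDerivAt_id s) hs).congr_deriv ?_
  simp only [id]
  field_simp
  ring

lemma hasDerivAt_neg_inv_sq (hs : s ≠ 0) :
    HasDerivAt (fun s => -(s ^ 2)⁻¹) (2 / s ^ 3) s := by
  refine ((hasDerivAt_pow 2 s).inv (pow_ne_zero 2 hs)).neg.congr_deriv ?_
  field_simp
  ring

end OneVariable

section BolWeb

variable {z : ℝ × ℝ}

lemma Iinv_ratio_g (hx : z.1 ≠ 0) (hx1 : z.1 ≠ 1) (hy : z.2 ≠ 0) :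
    Iinv ratio (fun z => (1 - z.2) / (1 - z.1)) z = 0 := by
  have hg : (fun z : ℝ × ℝ => (1 - z.2) / (1 - z.1)) =
      sepMul (fun s => (1 - s)⁻¹) (fun t => 1 - t) :=
    funext fun _ => div_eq_inv_mul _ _
  have hu : ∀ᶠ s in 𝓝 z.1, HasDerivAt (fun s => (1 - s)⁻¹) ((1 - s) ^ 2)⁻¹ s :=
    (eventually_ne_nhds hx1).mono fun _ => hasDerivAt_inv_one_sub
  have hv : ∀ᶠ t in 𝓝 z.2, HasDerivAt (fun t => 1 - t) (-1) t :=
    Eventually.of_forall fun t => (hasDerivAt_id t).const_sub 1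
  have hud := hu.mono fun _ h => h.differentiableAt
  have hvd := hv.mono fun _ h => h.differentiableAt
  rw [hg, Iinv, d1_d1_ratio_sepMul hx hy hu (hasDerivAt_inv_one_sub_sq hx1) hvd,
    d1_d2_ratio_sepMul hx hu hv (differentiableAt_const _),
    d2_d2_ratio_sepMul hx hud hv (hasDerivAt_const _ _),
    (d1_ratio_sepMul_eventuallyEq hx hu hvd).eq_of_nhds,
    (d2_ratio_sepMul_eventuallyEq hx hud hv).eq_of_nhds]
  simp only [sepMul]
  field_simp
  ring

lemma Iinv_ratio_g₅ (hx : z.1 ≠ 0) (hx1 : z.1 ≠ 1) (hy : z.2 ≠ 0) (hy1 : z.2 ≠ 1)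
    (hxy : z.1 ≠ z.2) :
    Iinv ratio (fun z => (z.1 - z.1 * z.2) / (z.2 - z.1 * z.2)) z = -2 * z.1 / z.2 := by
  have hg₅ : (fun z : ℝ × ℝ => (z.1 - z.1 * z.2) / (z.2 - z.1 * z.2)) =
      sepMul (fun s => s / (1 - s)) (fun t => (1 - t) / t) := by
    funext w
    rw [sepMul, div_mul_div_comm]
    ring_nf
  have hu : ∀ᶠ s in 𝓝 z.1, HasDerivAt (fun s => s / (1 - s)) ((1 - s) ^ 2)⁻¹ s :=
    (eventually_ne_nhds hx1).mono fun _ => hasDerivAt_div_one_sub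
  have hv : ∀ᶠ t in 𝓝 z.2, HasDerivAt (fun t => (1 - t) / t) (-(t ^ 2)⁻¹) t :=
    (eventually_ne_nhds hy).mono fun _ => hasDerivAt_one_sub_div
  have hud := hu.mono fun _ h => h.differentiableAt
  have hvd := hv.mono fun _ h => h.differentiableAt
  rw [hg₅, Iinv, d1_d1_ratio_sepMul hx hy hu (hasDerivAt_inv_one_sub_sq hx1) hvd,
    d1_d2_ratio_sepMul hx hu hv (hasDerivAt_neg_inv_sq hy).differentiableAt,
    d2_d2_ratio_sepMul hx hud hv (hasDerivAt_neg_inv_sq hy),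
    (d1_ratio_sepMul_eventuallyEq hx hu hvd).eq_of_nhds,
    (d2_ratio_sepMul_eventuallyEq hx hud hv).eq_of_nhds]
  simp only [sepMul]
  field_simp
  rw [div_eq_iff (by contrapose! hxy; linarith)]
  ring

end BolWeb

/-- for the Bol 5-web given by `f = y/x`, `g = (1-y)/(1-x)`,
`g₅ = (x - xy)/(y - xy)`, the relative invariant `I₅ = I(f,g₅) - I(f,g)` is not
identically zero on `U = {0 < x < 1, 0 < y < 1, x ≠ y}`. -/
theorem stmt_18 :
    ∃ z ∈ {z : ℝ × ℝ | 0 < z.1 ∧ z.1 < 1 ∧ 0 < z.2 ∧ z.2 < 1 ∧ z.1 ≠ z.2},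
      Iinv (fun z => z.2 / z.1) (fun z => (z.1 - z.1 * z.2) / (z.2 - z.1 * z.2)) z -
        Iinv (fun z => z.2 / z.1) (fun z => (1 - z.2) / (1 - z.1)) z ≠ 0 := by
  refine ⟨(1 / 2, 1 / 4), by norm_num, ?_⟩
  rw [Iinv_ratio_g₅ (by norm_num) (by norm_num) (by norm_num) (by norm_num) (by norm_num),
    Iinv_ratio_g (by norm_num) (by norm_num) (by norm_num)]
  norm_num
end
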